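/- arXiv:1511.07086 — 2 statements merged into one kernel-verified Lean document; each statement's English description precedes it below -/
import Mathlib

section
/- Let n ∈ ℕ, let x, p : ℝ × ℝⁿ → ℝⁿ be continuously differentiable maps, let H₁ : ℝⁿ × ℝⁿ → ℝ be continuously differentiable, and let tᵢ : ℝⁿ → ℝ be differentiable at q̄, such that H₁(x(tᵢ(q), q), p(tᵢ(q), q)) = 0 for all q in a neighborhood of q̄. Let Ḣ₁ denote the derivative of t ↦ H₁(x(t, q̄), p(t, q̄)) at t = tᵢ(q̄), and suppose Ḣ₁ ≠ 0. Then the derivative of tᵢ at q̄ is given by Dtᵢ(q̄) = −(∂H₁/∂x · ∂x/∂q + ∂H₁/∂p · ∂p/∂q)/Ḣ₁, where ∂x/∂q and ∂p/∂q are the partial derivatives of x and p in q evaluated at (tᵢ(q̄), q̄), and ∂H₁/∂x, ∂H₁/∂p are the partial gradients of H₁ evaluated at (x(tᵢ(q̄), q̄), p(tᵢ(q̄), q̄)). -/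
/-!
Writing `G z = H₁ (x z, p z)`, the chain rule applied to the identity `G (tᵢ q, q) = 0` gives
`Ḣ₁ • Dtᵢ + ∂_q G = 0`, which can be solved for `Dtᵢ` because `Ḣ₁ ≠ 0`. The partial derivative
`∂_q G` is again computed by the chain rule, as the sum of the partial gradients of `H₁` composed
with `∂x/∂q` and `∂p/∂q`.
-/

open Filter Topology ContinuousLinearMap

section

variable {𝕜 : Type*} [NontriviallyNormedField 𝕜]
  {E F₁ F₂ K : Type*} [NormedAddCommGroup E] [NormedSpace 𝕜 E] [NormedAddCommGroup F₁]
  [NormedSpace 𝕜 F₁] [NormedAddCommGroup F₂] [NormedSpace 𝕜 F₂] [NormedAddCommGroup K]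
  [NormedSpace 𝕜 K]

theorem ContinuousLinearMap.comp_prod_eq_add (L : F₁ × F₂ →L[𝕜] K) (f : E →L[𝕜] F₁)
    (g : E →L[𝕜] F₂) :
    L.comp (f.prod g) = (L.comp (inl 𝕜 F₁ F₂)).comp f + (L.comp (inr 𝕜 F₁ F₂)).comp g := by
  ext v
  simp [← map_add]

theorem DifferentiableAt.fderiv_comp_prodMk_left {H : F₁ × F₂ → K} {a : F₁} {b : F₂}
    (hH : DifferentiableAt 𝕜 H (a, b)) :
    fderiv 𝕜 (fun ξ => H (ξ, b)) a = (fderiv 𝕜 H (a, b)).comp (inl 𝕜 F₁ F₂) :=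
  (hH.hasFDerivAt.comp a (hasFDerivAt_prodMk_left a b)).fderiv

theorem DifferentiableAt.fderiv_comp_prodMk_right {H : F₁ × F₂ → K} {a : F₁} {b : F₂}
    (hH : DifferentiableAt 𝕜 H (a, b)) :
    fderiv 𝕜 (fun π => H (a, π)) b = (fderiv 𝕜 H (a, b)).comp (inr 𝕜 F₁ F₂) :=
  (hH.hasFDerivAt.comp b (hasFDerivAt_prodMk_right a b)).fderiv

theorem fderiv_comp_prodMk_eq_add {H : F₁ × F₂ → K} {f : E → F₁} {g : E → F₂} {y : E}
    (hH : DifferentiableAt 𝕜 H (f y, g y)) (hf : DifferentiableAt 𝕜 f y)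
    (hg : DifferentiableAt 𝕜 g y) :
    fderiv 𝕜 (fun y => H (f y, g y)) y =
      (fderiv 𝕜 (fun ξ => H (ξ, g y)) (f y)).comp (fderiv 𝕜 f y) +
        (fderiv 𝕜 (fun π => H (f y, π)) (g y)).comp (fderiv 𝕜 g y) := by
  rw [fderiv_fun_comp y hH (hf.prodMk hg), hf.fderiv_prodMk hg, comp_prod_eq_add,
    hH.fderiv_comp_prodMk_left, hH.fderiv_comp_prodMk_right]

theorem fderiv_eq_neg_inv_smul_of_implicit {G : 𝕜 × E → 𝕜} {τ : E → 𝕜} {q₀ : E} {c : 𝕜}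
    (hG : DifferentiableAt 𝕜 G (τ q₀, q₀)) (hτ : DifferentiableAt 𝕜 τ q₀)
    (hzero : ∀ᶠ q in 𝓝 q₀, G (τ q, q) = 0) (hc : HasDerivAt (fun t => G (t, q₀)) c (τ q₀))
    (hc0 : c ≠ 0) :
    fderiv 𝕜 τ q₀ = (-c⁻¹) • fderiv 𝕜 (fun q => G (τ q₀, q)) q₀ := by
  have hconst : (fun q => G (τ q, q)) =ᶠ[𝓝 q₀] fun _ => 0 := hzero
  have hchain :=
    fderiv_comp_prodMk_eq_add (H := G) (g := fun q => q) hG hτ differentiableAt_fun_id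
  rw [hconst.fderiv_eq, fderiv_const_apply, hc.hasFDerivAt.fderiv, fderiv_fun_id, comp_id]
    at hchain
  have hsum : c • fderiv 𝕜 τ q₀ + fderiv 𝕜 (fun q => G (τ q₀, q)) q₀ = 0 := by
    rw [hchain]
    ext
    simp [mul_comm]
  calc fderiv 𝕜 τ q₀ = c⁻¹ • c • fderiv 𝕜 τ q₀ := (inv_smul_smul₀ hc0 _).symm
    _ = (-c⁻¹) • fderiv 𝕜 (fun q => G (τ q₀, q)) q₀ := by
      rw [eq_neg_of_add_eq_zero_left hsum, smul_neg, ← neg_smul]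

end

/-- Sensitivity of switching times to the parameter of a family of extremals:
differentiating the identity `H₁(x(tᵢ(q), q), p(tᵢ(q), q)) = 0` at a regular switching
point (`Ḣ₁ ≠ 0`) yields
`Dtᵢ(qbar) = −(∂H₁/∂x ∘ ∂x/∂q + ∂H₁/∂p ∘ ∂p/∂q)/Ḣ₁`. -/
theorem switching_time_sensitivity (n : ℕ)
    (x p : ℝ × (Fin n → ℝ) → (Fin n → ℝ))
    (H₁ : (Fin n → ℝ) × (Fin n → ℝ) → ℝ)
    (tᵢ : (Fin n → ℝ) → ℝ) (qbar : Fin n → ℝ)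
    (hx : ContDiff ℝ 1 x) (hp : ContDiff ℝ 1 p) (hH : ContDiff ℝ 1 H₁)
    (ht : DifferentiableAt ℝ tᵢ qbar)
    (hzero : ∀ᶠ q in nhds qbar, H₁ (x (tᵢ q, q), p (tᵢ q, q)) = 0)
    (Hdot : ℝ)
    (hHdot : HasDerivAt (fun t => H₁ (x (t, qbar), p (t, qbar))) Hdot (tᵢ qbar))
    (hHdot0 : Hdot ≠ 0) :
    fderiv ℝ tᵢ qbar =
      (-Hdot⁻¹) •
        ((fderiv ℝ (fun ξ => H₁ (ξ, p (tᵢ qbar, qbar))) (x (tᵢ qbar, qbar))).comp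
            (fderiv ℝ (fun q => x (tᵢ qbar, q)) qbar) +
          (fderiv ℝ (fun π => H₁ (x (tᵢ qbar, qbar), π)) (p (tᵢ qbar, qbar))).comp
            (fderiv ℝ (fun q => p (tᵢ qbar, q)) qbar)) := by
  have hxd := hx.differentiable one_ne_zero
  have hpd := hp.differentiable one_ne_zero
  have hHd := hH.differentiable one_ne_zero
  rw [fderiv_eq_neg_inv_smul_of_implicit (G := fun z => H₁ (x z, p z))
      ((hHd _).comp _ ((hxd _).prodMk (hpd _))) ht hzero hHdot hHdot0,
    fderiv_comp_prodMk_eq_add (hHd _) (by fun_prop) (by fun_prop)]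
end

section
/- Let n ∈ ℕ. Let X⁺ be an invertible n×n real matrix, P⁺ an n×n real matrix, and set S⁺ := P⁺ (X⁺)⁻¹. Let f, g ∈ ℝⁿ be column vectors, w a 1×n row vector, Δ ∈ ℝ, and set R := w (X⁺)⁻¹. Define X⁻ := X⁺ + Δ f w and P⁻ := P⁺ − Δ g w. If 1 + Δ·(R f) ≠ 0, then X⁻ is invertible and P⁻ (X⁻)⁻¹ = (S⁺ − Δ g R) · (I − Δ (f R)/(1 + Δ · R f)), where f R and g R denote n×n outer products and I is the identity matrix. -/
open scoped Matrix

/-!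
Since `R = w (X⁺)⁻¹`, the update factors as `X⁻ = (1 + Δ f R) X⁺`, and the rank-one perturbation
`1 + Δ f R` of the identity has the Sherman–Morrison inverse `1 - Δ / (1 + Δ R f) • f R`.
Hence `P⁻ (X⁻)⁻¹ = P⁻ (X⁺)⁻¹ (1 - Δ / (1 + Δ R f) • f R)`, and `P⁻ (X⁺)⁻¹ = S⁺ - Δ g R`.
-/

namespace Matrix

variable {ι K : Type*} [Fintype ι] [DecidableEq ι]

theorem one_sub_smul_vecMulVec_mul_one_add_smul_vecMulVec [Field K] (u v : ι → K) (a : K)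
    (h : 1 + a * (v ⬝ᵥ u) ≠ 0) :
    (1 - (a / (1 + a * (v ⬝ᵥ u))) • vecMulVec u v) * (1 + a • vecMulVec u v) = 1 := by
  set t := a / (1 + a * (v ⬝ᵥ u))
  have ht : a - t - t * a * (v ⬝ᵥ u) = 0 := by
    simp only [t]
    field_simp
    ring
  calc (1 - t • vecMulVec u v) * (1 + a • vecMulVec u v)
      = 1 + (a - t - t * a * (v ⬝ᵥ u)) • vecMulVec u v := by
        simp only [sub_mul, mul_add, one_mul, mul_one, smul_mul_smul_comm,
          vecMulVec_mul_vecMulVec, vecMulVec_smul]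
        module
    _ = 1 := by rw [ht, zero_smul, add_zero]

theorem add_smul_vecMulVec_eq_mul [CommRing K] (X : Matrix ι ι K) (hX : IsUnit X.det)
    (a : K) (u w : ι → K) :
    X + a • vecMulVec u w = (1 + a • vecMulVec u (w ᵥ* X⁻¹)) * X := by
  rw [add_mul, one_mul, smul_mul, vecMulVec_mul, vecMul_vecMul, nonsing_inv_mul X hX,
    vecMul_one]

end Matrix

open Matrix in
/-- Jump formula for the gain matrix `S = P X⁻¹` at a switching time of a bang-bang
extremal: with `X⁻ = X⁺ + Δ f w`, `P⁻ = P⁺ − Δ g w`, `R = w (X⁺)⁻¹` and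
`1 + Δ (R f) ≠ 0`, the matrix `X⁻` is invertible and
`P⁻ (X⁻)⁻¹ = (S⁺ − Δ g R) (I − Δ (f R)/(1 + Δ R f))`. -/
theorem gain_matrix_jump_formula (n : ℕ) (Xp : Matrix (Fin n) (Fin n) ℝ)
    (hX : IsUnit Xp.det) (Pp : Matrix (Fin n) (Fin n) ℝ)
    (f g w : Fin n → ℝ) (Δ : ℝ)
    (h : 1 + Δ * (Matrix.vecMul w Xp⁻¹ ⬝ᵥ f) ≠ 0) :
    IsUnit (Xp + Δ • Matrix.vecMulVec f w).det ∧
    (Pp - Δ • Matrix.vecMulVec g w) * (Xp + Δ • Matrix.vecMulVec f w)⁻¹ =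
      (Pp * Xp⁻¹ - Δ • Matrix.vecMulVec g (Matrix.vecMul w Xp⁻¹)) *
        (1 - (Δ / (1 + Δ * (Matrix.vecMul w Xp⁻¹ ⬝ᵥ f))) •
          Matrix.vecMulVec f (Matrix.vecMul w Xp⁻¹)) := by
  have hleft := one_sub_smul_vecMulVec_mul_one_add_smul_vecMulVec f (w ᵥ* Xp⁻¹) Δ h
  rw [add_smul_vecMulVec_eq_mul Xp hX]
  refine ⟨?_, ?_⟩
  · rw [det_mul]
    exact (isUnit_det_of_left_inverse hleft).mul hX
  · rw [Matrix.mul_inv_rev, inv_eq_left_inv hleft, ← Matrix.mul_assoc, sub_mul, smul_mul,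
      vecMulVec_mul]
end
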